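/- The unit sphere in a real inner product space of dimension at least 3 is simply connected. -/

import Mathlib

/-!
Every path `p` on the sphere is homotopic to the normalization `q` of a fine piecewise-linear
approximation of it: `q t` is never antipodal to `p t`, so projecting the straight-line homotopy
radially onto the sphere works. Such a `q` stays in finitely many planes through the origin.
If `dim E ≥ 3`, finitely many planes miss some point `z` of the sphere, so two such paths both
live in the sphere minus `z`, which is contractible by stereographic projection.
-/

open Metric Set NormedSpace unitInterval

theorem Path.homotopic_of_forall_mem {X : Type*} [TopologicalSpace X] {s : Set X}
    (hs : IsSimplyConnected s) {x y : X} {p q : Path x y} (hp : ∀ t, p t ∈ s)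
    (hq : ∀ t, q t ∈ s) : p.Homotopic q := by
  have := hs.simplyConnectedSpace
  let lift (γ : Path x y) (hγ : ∀ t, γ t ∈ s) :
      Path (⟨x, p.source ▸ hp 0⟩ : s) ⟨y, p.target ▸ hp 1⟩ :=
    { toFun t := ⟨γ t, hγ t⟩
      continuous_toFun := γ.continuous.subtype_mk _
      source' := Subtype.ext γ.source
      target' := Subtype.ext γ.target }
  exact (SimplyConnectedSpace.paths_homotopic (lift p hp) (lift q hq)).map
    ⟨Subtype.val, continuous_subtype_val⟩

section PiecewiseLinear

open Finset

variable {E : Type*} [NormedAddCommGroup E] [NormedSpace ℝ E]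

/-- The map `ℝ → E` that is affine on each `[j / N, (j + 1) / N]`, takes the value `c j` at
`j / N` for `j ≤ N`, and is constant outside `[0, 1]`. -/
noncomputable def piecewiseLinear (c : ℕ → E) (N : ℕ) (t : ℝ) : E :=
  c 0 + ∑ i ∈ range N, max 0 (min 1 (N * t - i)) • (c (i + 1) - c i)

theorem continuous_piecewiseLinear (c : ℕ → E) (N : ℕ) :
    Continuous (piecewiseLinear c N) := by
  unfold piecewiseLinear
  fun_prop

theorem piecewiseLinear_eq_lineMap (c : ℕ → E) {N j : ℕ} (hj : j < N) {t : ℝ}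
    (ht : (N : ℝ) * t ∈ Icc (j : ℝ) (j + 1)) :
    piecewiseLinear c N t = AffineMap.lineMap (c j) (c (j + 1)) ((N : ℝ) * t - j) := by
  have hsplit : range N = range j ∪ {j} ∪ Finset.Ico (j + 1) N := by
    ext i
    simp only [Finset.mem_union, Finset.mem_Ico, Finset.mem_singleton, Finset.mem_range]
    omega
  have hbefore : ∀ i ∈ range j, max 0 (min 1 ((N : ℝ) * t - i)) • (c (i + 1) - c i)
      = c (i + 1) - c i := by
    intro i hi
    have : (i : ℝ) + 1 ≤ j := by exact_mod_cast Finset.mem_range.1 hi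
    rw [min_eq_left (by linarith [ht.1]), max_eq_right zero_le_one, one_smul]
  have hafter : ∀ i ∈ Finset.Ico (j + 1) N,
      max 0 (min 1 ((N : ℝ) * t - i)) • (c (i + 1) - c i) = 0 := by
    intro i hi
    have : (j : ℝ) + 1 ≤ i := by exact_mod_cast (Finset.mem_Ico.1 hi).1
    rw [min_eq_right (by linarith [ht.2]), max_eq_left (by linarith [ht.2]), zero_smul]
  rw [piecewiseLinear, hsplit, sum_union (by simp [Finset.disjoint_left]; omega),
    sum_union (by simp), sum_congr rfl hbefore, sum_eq_zero hafter, sum_range_sub,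
    sum_singleton, min_eq_right (by linarith [ht.2]), max_eq_right (by linarith [ht.1]),
    AffineMap.lineMap_apply_module]
  module

theorem piecewiseLinear_zero (c : ℕ → E) (N : ℕ) : piecewiseLinear c N 0 = c 0 := by
  simp [piecewiseLinear]

theorem piecewiseLinear_one (c : ℕ → E) (N : ℕ) : piecewiseLinear c N 1 = c N := by
  have h : ∀ i ∈ range N,
      max 0 (min 1 ((N : ℝ) * 1 - i)) • (c (i + 1) - c i) = c (i + 1) - c i := by
    intro i hi
    have : (i : ℝ) + 1 ≤ N := by exact_mod_cast Finset.mem_range.1 hi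
    rw [min_eq_left (by linarith), max_eq_right zero_le_one, one_smul]
  rw [piecewiseLinear, sum_congr rfl h, sum_range_sub, add_sub_cancel]

theorem exists_lt_mul_mem_Icc {N : ℕ} (hN : 0 < N) {t : ℝ} (ht : t ∈ Icc (0 : ℝ) 1) :
    ∃ j < N, (N : ℝ) * t ∈ Icc (j : ℝ) (j + 1) := by
  have hNt : 0 ≤ (N : ℝ) * t := mul_nonneg N.cast_nonneg ht.1
  refine ⟨min ⌊(N : ℝ) * t⌋₊ (N - 1), by omega, ?_, ?_⟩
  · exact (Nat.cast_le.2 (min_le_left _ _)).trans (Nat.floor_le hNt)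
  · rcases le_total ⌊(N : ℝ) * t⌋₊ (N - 1) with h | h
    · rw [min_eq_left h]; exact (Nat.lt_floor_add_one _).le
    · rw [min_eq_right h, Nat.cast_sub hN, Nat.cast_one, sub_add_cancel]
      exact mul_le_of_le_one_right N.cast_nonneg ht.2

theorem exists_piecewiseLinear_approx {f : ℝ → E} (hf : ContinuousOn f (Icc 0 1)) {ε : ℝ}
    (hε : 0 < ε) : ∃ N : ℕ, 0 < N ∧ ∀ t ∈ Icc (0 : ℝ) 1, ∃ j < N,
      piecewiseLinear (fun i ↦ f (i / N)) N t ∈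
        segment ℝ (f (j / N)) (f ((j + 1 : ℕ) / N)) ∩ ball (f t) ε := by
  obtain ⟨δ, hδ, hfδ⟩ :=
    Metric.uniformContinuousOn_iff.1 (isCompact_Icc.uniformContinuousOn_of_continuous hf) ε hε
  obtain ⟨n, hn⟩ := exists_nat_one_div_lt hδ
  refine ⟨n + 1, n.succ_pos, fun t ht ↦ ?_⟩
  set N := n + 1
  have hN : (0 : ℝ) < N := by positivity
  have hsample (k : ℕ) (hk : k ≤ N) (hkt : |(k : ℝ) - N * t| ≤ 1) :
      f (k / N) ∈ ball (f t) ε := by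
    refine hfδ _ ⟨by positivity, div_le_one_of_le₀ (by exact_mod_cast hk) hN.le⟩ _ ht ?_
    calc dist ((k : ℝ) / N) t = |(k : ℝ) - N * t| / N := by
          rw [Real.dist_eq, div_sub' hN.ne', abs_div, abs_of_pos hN, mul_comm]
      _ ≤ 1 / N := by gcongr
      _ < δ := by exact_mod_cast hn
  obtain ⟨j, hjN, hjt⟩ := exists_lt_mul_mem_Icc (Nat.succ_pos n) ht
  have hseg : AffineMap.lineMap (f (j / N)) (f ((j + 1 : ℕ) / N)) ((N : ℝ) * t - j) ∈
      segment ℝ (f (j / N)) (f ((j + 1 : ℕ) / N)) :=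
    lineMap_mem_segment ℝ _ _ ⟨by linarith [hjt.1], by linarith [hjt.2]⟩
  refine ⟨j, hjN, ?_⟩
  rw [piecewiseLinear_eq_lineMap _ hjN hjt]
  refine ⟨hseg,
    (convex_ball _ _).segment_subset (hsample j hjN.le ?_) (hsample (j + 1) hjN ?_) hseg⟩
  all_goals rw [abs_le]; push_cast; constructor <;> linarith [hjt.1, hjt.2]

end PiecewiseLinear

section Sphere

variable {E : Type*} [NormedAddCommGroup E] [NormedSpace ℝ E]

@[simp]
theorem normalize_coe_sphere (v : sphere (0 : E) 1) : normalize (v : E) = v :=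
  normalize_eq_self_of_norm_eq_one (norm_eq_of_mem_sphere v)

theorem continuous_normalize_sphere {X : Type*} [TopologicalSpace X] {f : X → E}
    (hf : Continuous f) (h0 : ∀ x, f x ≠ 0) :
    Continuous fun x ↦ (⟨normalize (f x), by simpa using h0 x⟩ : sphere (0 : E) 1) :=
  ((hf.norm.inv₀ fun x ↦ norm_ne_zero_iff.2 (h0 x)).smul hf).subtype_mk _

theorem lineMap_ne_zero_of_norm_eq_one {u v : E} (hu : ‖u‖ = 1) (hv : ‖v‖ = 1)
    (huv : u + v ≠ 0) {s : ℝ} (hs : s ∈ Icc (0 : ℝ) 1) : AffineMap.lineMap u v s ≠ 0 := by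
  rw [AffineMap.lineMap_apply_module]
  intro h
  have hnorm : ‖(1 - s) • u‖ = ‖s • v‖ := by rw [eq_neg_of_add_eq_zero_left h, norm_neg]
  rw [norm_smul, norm_smul, hu, hv, Real.norm_of_nonneg (sub_nonneg.2 hs.2),
    Real.norm_of_nonneg hs.1] at hnorm
  obtain rfl : s = 1 / 2 := by linarith
  rw [show (1 : ℝ) - 1 / 2 = 1 / 2 by norm_num, ← smul_add, smul_eq_zero] at h
  exact huv (h.resolve_left (by norm_num))

theorem Path.homotopic_of_forall_add_ne_zero {x y : sphere (0 : E) 1} (p q : Path x y)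
    (h : ∀ t, (p t : E) + q t ≠ 0) : p.Homotopic q := by
  let F (st : I × I) : E := AffineMap.lineMap (p st.2 : E) (q st.2) (st.1 : ℝ)
  have hF : ∀ st, F st ≠ 0 := fun st ↦ lineMap_ne_zero_of_norm_eq_one
    (norm_eq_of_mem_sphere _) (norm_eq_of_mem_sphere _) (h st.2) st.1.2
  refine ⟨⟨⟨⟨_, continuous_normalize_sphere (by fun_prop) hF⟩, ?_, ?_⟩, ?_⟩⟩
  · intro t; ext1; simp [F]
  · intro t; ext1; simp [F]
  · rintro s t (rfl | rfl) <;> ext1 <;> simp [F]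

theorem normalize_add_ne_zero_of_dist_lt {u w : E} (hu : ‖u‖ = 1) (hw : dist w u < 1) :
    normalize w + u ≠ 0 := by
  have hw0 : w ≠ 0 := by rintro rfl; simp [hu] at hw
  intro h
  have hnormalize : ‖normalize w - w‖ ≤ dist w u := by
    calc ‖normalize w - w‖ = ‖(1 - ‖w‖) • normalize w‖ := by
          rw [sub_smul, one_smul, norm_smul_normalize]
      _ = |1 - ‖w‖| := by
          rw [norm_smul, norm_normalize_eq_one_iff.2 hw0, mul_one, Real.norm_eq_abs]
      _ = |‖u‖ - ‖w‖| := by rw [hu]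
      _ ≤ dist w u := by rw [dist_comm, dist_eq_norm]; exact abs_norm_sub_norm_le u w
  have : (2 : ℝ) ≤ 2 * dist w u := by
    calc (2 : ℝ) = ‖normalize w - u‖ := by
          rw [eq_neg_of_add_eq_zero_left h, ← neg_add', norm_neg, ← two_smul ℝ u, norm_smul,
            hu, Real.norm_two, mul_one]
      _ ≤ ‖normalize w - w‖ + ‖w - u‖ := norm_sub_le_norm_sub_add_norm_sub _ _ _
      _ ≤ 2 * dist w u := by rw [← dist_eq_norm w u]; linarith
  linarith

theorem Path.exists_homotopic_forall_mem_rank_le_two {x y : sphere (0 : E) 1} (p : Path x y) :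
    ∃ (q : Path x y) (S : Finset (Submodule ℝ E)), p.Homotopic q ∧
      (∀ V ∈ S, Module.rank ℝ V ≤ 2) ∧ ∀ t, ∃ V ∈ S, (q t : E) ∈ V := by
  classical
  let f (t : ℝ) : E := p.extend t
  obtain ⟨N, hN, happrox⟩ := exists_piecewiseLinear_approx (f := f) (by fun_prop) one_pos
  set c : ℕ → E := fun i ↦ f (i / N)
  set w := piecewiseLinear c N
  have hw (t : I) : ∃ j < N, w t ∈ segment ℝ (c j) (c (j + 1)) ∧ dist (w t) (p t) < 1 := by
    obtain ⟨j, hj, hseg, hball⟩ := happrox t t.2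
    exact ⟨j, hj, hseg, by simpa [f, p.extend_extends'] using hball⟩
  have hw0 (t : I) : w t ≠ 0 := by
    obtain ⟨-, -, -, hdist⟩ := hw t
    rintro h
    simp [h] at hdist
  let q : Path x y :=
    { toFun t := ⟨normalize (w t), by simpa using hw0 t⟩
      continuous_toFun := continuous_normalize_sphere
        ((continuous_piecewiseLinear c N).comp continuous_subtype_val) hw0
      source' := by ext1; simp [w, piecewiseLinear_zero, c, f]
      target' := by ext1; simp [w, piecewiseLinear_one, c, f, hN.ne'] }
  refine ⟨q, (Finset.range N).image fun j ↦ Submodule.span ℝ {c j, c (j + 1)}, ?_, ?_, ?_⟩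
  · refine Path.homotopic_of_forall_add_ne_zero p q fun t ↦ ?_
    obtain ⟨-, -, -, hdist⟩ := hw t
    rw [add_comm]
    exact normalize_add_ne_zero_of_dist_lt (norm_eq_of_mem_sphere _) hdist
  · simp only [Finset.mem_image]
    rintro _ ⟨j, -, rfl⟩
    exact (rank_span_le _).trans (Cardinal.mk_insert_le.trans (by simp; norm_num))
  · intro t
    obtain ⟨j, hj, hseg, -⟩ := hw t
    have hspan : w t ∈ Submodule.span ℝ {c j, c (j + 1)} :=
      (Submodule.span ℝ {c j, c (j + 1)}).convex.segment_subset
        (Submodule.subset_span (mem_insert (c j) {c (j + 1)}))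
        (Submodule.subset_span (mem_insert_of_mem (c j) (mem_singleton (c (j + 1))))) hseg
    exact ⟨_, Finset.mem_image_of_mem _ (Finset.mem_range.2 hj), Submodule.smul_mem _ _ hspan⟩

theorem exists_mem_sphere_forall_notMem [Nontrivial E] {S : Finset (Submodule ℝ E)}
    (hS : ⊤ ∉ S) : ∃ z : sphere (0 : E) 1, ∀ V ∈ S, (z : E) ∉ V := by
  classical
  obtain ⟨w, hw⟩ : ∃ w : E, w ∉ ⋃ V ∈ insert ⊥ S, (V : Set E) := by
    by_contra! h
    exact Subspace.biUnion_ne_univ_of_top_notMem (by simp [hS]) (eq_univ_of_forall h)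
  simp only [Finset.mem_insert, iUnion_iUnion_eq_or_left, mem_union, SetLike.mem_coe,
    Submodule.mem_bot, mem_iUnion, not_or, not_exists] at hw
  refine ⟨⟨normalize w, by simpa using hw.1⟩, fun V hV hz ↦ hw.2 V hV ?_⟩
  rw [← norm_smul_normalize w]
  exact V.smul_mem _ hz

end Sphere

theorem isSimplyConnected_compl_singleton_sphere {E : Type*} [NormedAddCommGroup E]
    [InnerProductSpace ℝ E] (z : sphere (0 : E) 1) :
    IsSimplyConnected ({z}ᶜ : Set (sphere (0 : E) 1)) := by
  have hz : ‖(z : E)‖ = 1 := norm_eq_of_mem_sphere z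
  let e : ({z}ᶜ : Set (sphere (0 : E) 1)) ≃ₜ (ℝ ∙ (z : E))ᗮ :=
    (Homeomorph.setCongr (stereographic_source hz).symm).trans <|
      (stereographic hz).toHomeomorphSourceTarget.trans <|
        (Homeomorph.setCongr (stereographic_target hz)).trans (Homeomorph.Set.univ _)
  have := e.contractibleSpace
  exact SimplyConnectedSpace.ofContractible _

theorem Path.homotopic_of_forall_mem_proper_submodules {E : Type*} [NormedAddCommGroup E]
    [InnerProductSpace ℝ E] [Nontrivial E] {S : Finset (Submodule ℝ E)} (hS : ⊤ ∉ S)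
    {x y : sphere (0 : E) 1} {p q : Path x y} (hp : ∀ t, ∃ V ∈ S, (p t : E) ∈ V)
    (hq : ∀ t, ∃ V ∈ S, (q t : E) ∈ V) : p.Homotopic q := by
  obtain ⟨z, hz⟩ := exists_mem_sphere_forall_notMem hS
  have hne {γ : Path x y} (hγ : ∀ t, ∃ V ∈ S, (γ t : E) ∈ V) (t : I) :
      γ t ∈ ({z}ᶜ : Set _) := by
    rintro (hγz : γ t = z)
    obtain ⟨V, hV, hγV⟩ := hγ t
    exact hz V hV (hγz ▸ hγV)
  exact Path.homotopic_of_forall_mem (isSimplyConnected_compl_singleton_sphere z)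
    (hne hp) (hne hq)

theorem stmt13 {E : Type*} [NormedAddCommGroup E] [InnerProductSpace ℝ E]
    (h : 3 ≤ Module.rank ℝ E) :
    SimplyConnectedSpace (Metric.sphere (0 : E) 1) := by
  classical
  have : Nontrivial E := rank_pos_iff_nontrivial.1 (lt_of_lt_of_le (by norm_num) h)
  rw [simply_connected_iff_paths_homotopic']
  refine ⟨isPathConnected_iff_pathConnectedSpace.1 <|
    isPathConnected_sphere (lt_of_lt_of_le (by norm_num) h) 0 zero_le_one, fun p₁ p₂ ↦ ?_⟩
  obtain ⟨q₁, S₁, hpq₁, hS₁, hq₁⟩ := p₁.exists_homotopic_forall_mem_rank_le_two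
  obtain ⟨q₂, S₂, hpq₂, hS₂, hq₂⟩ := p₂.exists_homotopic_forall_mem_rank_le_two
  have htop : ⊤ ∉ S₁ ∪ S₂ := fun hmem ↦ by
    have h2 : Module.rank ℝ (⊤ : Submodule ℝ E) ≤ 2 :=
      (Finset.mem_union.1 hmem).elim (hS₁ ⊤) (hS₂ ⊤)
    rw [rank_top] at h2
    exact absurd (h.trans h2) (by norm_num)
  have hq : q₁.Homotopic q₂ := Path.homotopic_of_forall_mem_proper_submodules htop
    (fun t ↦ (hq₁ t).imp fun _ hV ↦ ⟨Finset.mem_union_left _ hV.1, hV.2⟩)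
    (fun t ↦ (hq₂ t).imp fun _ hV ↦ ⟨Finset.mem_union_right _ hV.1, hV.2⟩)
  exact hpq₁.trans (hq.trans hpq₂.symm)
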